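/- arXiv:1412.1933 — 2 statements merged into one kernel-verified Lean document; each statement's English description precedes it below -/
import Mathlib

section
/- Let A be a 3-dimensional (0,1)-matrix of order n. For i, j ∈ {1,…,n}, let l_{i,j} denote the 1-dimensional plane {a_{i,j,k} : k = 1,…,n}. Suppose that for each i the number of indices j such that l_{i,j} contains at least one 1 is at most m_i with 1 ≤ m_i, and that every plane l_{i,j} contains at most s_i ones with 1 ≤ s_i. Then per A ≤ ∏_{i=1}^n (m_i!)^{1/m_i} · (s_i!)^{1/s_i}. -/
/-!
For fixed `σ`, the inner sum `∑_π ∏_i a_{i,σ(i),π(i)}` counts the perfect matchings of the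
(0,1)-matrix `(a_{i,σ(i),k})_{i,k}`, whose row sums are at most `s_i`. It vanishes unless `σ` is
itself a perfect matching of the (0,1)-matrix recording which lines `l_{i,j}` contain a 1, whose
row sums are at most `m_i`. Both counts are bounded by Brégman's theorem
`per B ≤ ∏_i (r_i!)^{1/r_i}` for a (0,1)-matrix `B` with row sums `r_i`.

Brégman's theorem follows by Schrijver's induction on the order. Let `p = per B` and let
`t_{ik}` be the number of perfect matchings through the entry `(i, k)`. Then `∑_k t_{ik} = p`,
`t_{ik} ≤ per B_{ik}` for the minor `B_{ik}`, and convexity of `x log x` over the `r_i` entries of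
row `i` gives `p log p ≤ p log r_i + ∑_σ log per B_{i,σ(i)}`, the sum running over the perfect
matchings `σ` of `B`. Bound each minor by the induction hypothesis and sum over `i`: for a fixed
`σ`, row `j` of `B_{i,σ(i)}` has lost an entry for exactly `r_j - 1` of the rows `i ≠ j`, so the
right-hand sides add up to `n p ∑_j log (r_j!)^{1/r_j}`.
-/

/-- The permanent of a 3-dimensional matrix `A` of order `n`:
`per A = ∑ ∏_i a_{i, σ(i), π(i)}` over all pairs of permutations `(σ, π)`. -/
noncomputable def perm3 {n : ℕ} (A : Fin n → Fin n → Fin n → ℝ) : ℝ :=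
  ∑ σ : Equiv.Perm (Fin n), ∑ π : Equiv.Perm (Fin n), ∏ i, A i (σ i) (π i)

open Finset

/-- `log ((r!)^(1/r))`; at `r = 0` both are `0`, as `1 / 0 = 0` in `ℝ`. -/
noncomputable def logRootFactorial (r : ℕ) : ℝ := Real.log r.factorial / r

lemma logRootFactorial_nonneg (r : ℕ) : 0 ≤ logRootFactorial r :=
  div_nonneg (Real.log_nonneg (by exact_mod_cast r.factorial_pos)) r.cast_nonneg

lemma natCast_mul_logRootFactorial (r : ℕ) :
    (r : ℝ) * logRootFactorial r = Real.log r.factorial := by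
  rcases r.eq_zero_or_pos with rfl | hr
  · simp
  · exact mul_div_cancel₀ _ (by positivity)

lemma log_succ_add_mul_logRootFactorial (r : ℕ) :
    Real.log (r + 1) + r * logRootFactorial r = (r + 1) * logRootFactorial (r + 1) := by
  rw [natCast_mul_logRootFactorial, ← Nat.cast_succ, natCast_mul_logRootFactorial,
    Nat.factorial_succ, Nat.cast_mul, Real.log_mul (by positivity) (by positivity)]

lemma logRootFactorial_le_log_succ (r : ℕ) : logRootFactorial r ≤ Real.log (r + 1) := by
  refine div_le_of_le_mul₀ r.cast_nonneg (Real.log_nonneg (by simp)) ?_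
  calc Real.log r.factorial ≤ Real.log (((r + 1 : ℕ) : ℝ) ^ r) :=
        Real.log_le_log (by positivity)
          (by exact_mod_cast r.factorial_le_pow.trans (Nat.pow_le_pow_left r.le_succ r))
    _ = Real.log (r + 1) * r := by push_cast; rw [Real.log_pow, mul_comm]

lemma monotone_logRootFactorial : Monotone logRootFactorial := by
  refine monotone_nat_of_le_succ fun r => le_of_mul_le_mul_left ?_ (r.cast_add_one_pos (α := ℝ))
  rw [← log_succ_add_mul_logRootFactorial]
  linarith [logRootFactorial_le_log_succ r]

lemma rpow_one_div_eq_exp_logRootFactorial (r : ℕ) :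
    (r.factorial : ℝ) ^ ((1 : ℝ) / r) = Real.exp (logRootFactorial r) := by
  rw [Real.rpow_def_of_pos (by positivity), logRootFactorial, mul_one_div]

lemma mul_log_add_sub_le_mul_log {w c : ℝ} (hw : 0 ≤ w) (hc : 0 < c) :
    w * Real.log c + w - c ≤ w * Real.log w := by
  rcases hw.eq_or_lt with rfl | hw
  · simpa using hc.le
  have := Real.log_le_sub_one_of_pos (div_pos hc hw)
  rw [Real.log_div hc.ne' hw.ne', le_sub_iff_add_le, le_div_iff₀ hw] at this
  linarith

lemma sum_mul_log_sum_le {ι : Type*} (t : Finset ι) (w : ι → ℝ) (hw : ∀ i ∈ t, 0 ≤ w i)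
    (hpos : 0 < ∑ i ∈ t, w i) :
    (∑ i ∈ t, w i) * Real.log (∑ i ∈ t, w i) ≤
      (∑ i ∈ t, w i) * Real.log #t + ∑ i ∈ t, w i * Real.log (w i) := by
  have ht : (0 : ℝ) < #t := by
    exact_mod_cast card_pos.2 (nonempty_of_sum_ne_zero hpos.ne')
  -- compare each `w i` with the mean `(∑ i ∈ t, w i) / #t`
  have key := sum_le_sum fun i hi => mul_log_add_sub_le_mul_log (hw i hi) (div_pos hpos ht)
  rw [sum_sub_distrib, sum_add_distrib, ← sum_mul, sum_const, nsmul_eq_mul,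
    mul_div_cancel₀ _ ht.ne', Real.log_div hpos.ne' ht.ne'] at key
  linarith

lemma sum_subtype_ne_eq_sub {α M : Type*} [Fintype α] [DecidableEq α] [AddCommGroup M]
    (f : α → M) (i : α) : ∑ j : {a // a ≠ i}, f j = ∑ j, f j - f i := by
  rw [← sum_erase_eq_sub (mem_univ i)]
  exact (sum_subtype _ (by simp) f).symm

def perfectMatchings {α β : Type*} [Fintype α] [DecidableEq α] [Fintype β] [DecidableEq β]
    (R : α → β → Prop) [DecidableRel R] : Finset (α ≃ β) :=
  {e | ∀ a, R a (e a)}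

def rowDegree {α β : Type*} [Fintype β] (R : α → β → Prop) [DecidableRel R] (a : α) : ℕ :=
  #{b | R a b}

def relMinor {α β : Type*} (R : α → β → Prop) (i : α) (k : β)
    (a : {a // a ≠ i}) (b : {b // b ≠ k}) : Prop :=
  R a b

instance {α β : Type*} (R : α → β → Prop) [DecidableRel R] (i : α) (k : β) :
    DecidableRel (relMinor R i k) :=
  fun a b => inferInstanceAs (Decidable (R a b))

lemma rowDegree_relMinor {α β : Type*} [Fintype β] [DecidableEq β] (R : α → β → Prop)
    [DecidableRel R] (i : α) (k : β) (j : {a // a ≠ i}) :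
    rowDegree (relMinor R i k) j = if R j k then rowDegree R j - 1 else rowDegree R j := by
  have : #{b : {b // b ≠ k} | relMinor R i k j b} = #(({b | R j b} : Finset β).erase k) := by
    rw [← card_map (Function.Embedding.subtype _)]
    congr 1
    ext b
    simp only [mem_map, mem_filter, mem_univ, true_and, Function.Embedding.coe_subtype, mem_erase]
    constructor
    · rintro ⟨b, hb, rfl⟩
      exact ⟨b.2, hb⟩
    · rintro ⟨hk, hb⟩
      exact ⟨⟨b, hk⟩, hb, rfl⟩
  rw [rowDegree, this, card_erase_eq_ite]
  simp [rowDegree]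

lemma sum_ite_rowDegree {α β : Type*} [Fintype β] (R : α → β → Prop) [DecidableRel R]
    (φ : ℕ → ℝ) (a : α) :
    ∑ b, φ (if R a b then rowDegree R a - 1 else rowDegree R a) =
      rowDegree R a * φ (rowDegree R a - 1) +
        (Fintype.card β - rowDegree R a) * φ (rowDegree R a) := by
  have hcard := card_filter_add_card_filter_not (s := univ) (R a)
  rw [card_univ] at hcard
  simp_rw [apply_ite φ]
  rw [sum_ite, sum_const, sum_const, nsmul_eq_mul, nsmul_eq_mul, rowDegree, ← hcard]
  push_cast
  ring

section PerfectMatchings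

variable {α β : Type*} [Fintype α] [DecidableEq α] [Fintype β] [DecidableEq β]

lemma mem_perfectMatchings {R : α → β → Prop} [DecidableRel R] {e : α ≃ β} :
    e ∈ perfectMatchings R ↔ ∀ a, R a (e a) := by
  simp [perfectMatchings]

lemma sum_prod_eq_card_perfectMatchings (w : α → β → ℝ) (hw : ∀ a b, w a b = 0 ∨ w a b = 1) :
    ∑ e : α ≃ β, ∏ a, w a (e a) = #(perfectMatchings fun a b => w a b = 1) := by
  have hboole (e : α ≃ β) : ∏ a, w a (e a) = ∏ a, if w a (e a) = 1 then 1 else 0 :=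
    prod_congr rfl fun a _ => by
      rcases hw a (e a) with h | h
      · rw [h, if_neg zero_ne_one]
      · rw [h, if_pos rfl]
  simp_rw [hboole, Fintype.prod_boole, sum_boole]
  rfl

variable (R : α → β → Prop) [DecidableRel R]

lemma card_filter_apply_eq_le_card_relMinor (i : α) (k : β) :
    #{e ∈ perfectMatchings R | e i = k} ≤ #(perfectMatchings (relMinor R i k)) := by
  -- `e ↦ swap (e i) k ∘ e` sends `i` to `k` and fixes the matchings with `e i = k`
  let restrict (e : α ≃ β) : {a // a ≠ i} ≃ {b // b ≠ k} :=
    (e.trans (Equiv.swap (e i) k)).subtypeEquiv fun a =>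
      ((e.trans _).injective.ne_iff' (by simp)).symm
  refine card_le_card_of_injOn restrict (fun e he => ?_) fun e he e' he' h => ?_
  · obtain ⟨hR, rfl⟩ := mem_filter.1 he
    exact mem_perfectMatchings.2 fun a => by
      simpa [restrict, relMinor] using mem_perfectMatchings.1 hR a
  · obtain ⟨-, hei⟩ := mem_filter.1 he
    obtain ⟨-, he'i⟩ := mem_filter.1 he'
    ext a
    rcases eq_or_ne a i with rfl | ha
    · rw [hei, he'i]
    · simpa [restrict, hei, he'i] using congrArg Subtype.val (Equiv.congr_fun h ⟨a, ha⟩)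

lemma mul_log_card_perfectMatchings_le (i : α) (g : β → ℝ)
    (hg : ∀ k, Real.log #(perfectMatchings (relMinor R i k)) ≤ g k) :
    (#(perfectMatchings R) : ℝ) * Real.log #(perfectMatchings R) ≤
      #(perfectMatchings R) * Real.log (rowDegree R i) + ∑ e ∈ perfectMatchings R, g (e i) := by
  set M := perfectMatchings R
  set t : β → ℝ := fun k => #{e ∈ M | e i = k}
  have hmaps : ∀ e ∈ M, e i ∈ ({b | R i b} : Finset β) := fun e he => by
    simp [mem_perfectMatchings.1 he i]
  have hfiber (f : β → ℝ) : ∑ e ∈ M, f (e i) = ∑ k ∈ {b | R i b}, t k * f k := by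
    rw [← sum_fiberwise_of_maps_to hmaps]
    refine sum_congr rfl fun k _ => ?_
    rw [sum_congr rfl fun e he => congrArg f (mem_filter.1 he).2, sum_const, nsmul_eq_mul]
  rcases (#M).eq_zero_or_pos with hM | hM
  · simp [card_eq_zero.1 hM]
  have hsum : ∑ k ∈ {b | R i b}, t k = #M := by simpa using (hfiber fun _ => 1).symm
  calc (#M : ℝ) * Real.log #M
      ≤ #M * Real.log (rowDegree R i) + ∑ k ∈ {b | R i b}, t k * Real.log (t k) := by
        have := sum_mul_log_sum_le ({b | R i b} : Finset β) t (fun _ _ => Nat.cast_nonneg _)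
          (by rw [hsum]; exact_mod_cast hM)
        rwa [hsum] at this
    _ ≤ #M * Real.log (rowDegree R i) + ∑ k ∈ {b | R i b}, t k * g k := by
        refine add_le_add le_rfl (sum_le_sum fun k _ => ?_)
        rcases (#{e ∈ M | e i = k}).eq_zero_or_pos with htk | htk
        · simp [t, htk]
        · have htk' : (0 : ℝ) < t k := by simpa [t] using htk
          have hle : t k ≤ #(perfectMatchings (relMinor R i k)) :=
            Nat.cast_le.2 (card_filter_apply_eq_le_card_relMinor R i k)
          exact mul_le_mul_of_nonneg_left ((Real.log_le_log htk' hle).trans (hg k)) htk'.le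
    _ = _ := by rw [hfiber]

lemma sum_sum_relMinor_eq (φ : ℕ → ℝ) {e : α ≃ β} (he : e ∈ perfectMatchings R) :
    ∑ i, ∑ j : {a // a ≠ i}, φ (rowDegree (relMinor R i (e i)) j) =
      ∑ a, (rowDegree R a * φ (rowDegree R a - 1) +
        (Fintype.card β - rowDegree R a) * φ (rowDegree R a) - φ (rowDegree R a - 1)) := by
  calc ∑ i, ∑ j : {a // a ≠ i}, φ (rowDegree (relMinor R i (e i)) j)
      = ∑ i, (∑ a, φ (if R a (e i) then rowDegree R a - 1 else rowDegree R a) -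
          φ (rowDegree R i - 1)) := by
        refine sum_congr rfl fun i _ => ?_
        simp_rw [rowDegree_relMinor]
        rw [sum_subtype_ne_eq_sub
          (fun a => φ (if R a (e i) then rowDegree R a - 1 else rowDegree R a)),
          if_pos (mem_perfectMatchings.1 he i)]
    _ = _ := by
        rw [sum_sub_distrib, sum_comm, ← sum_sub_distrib]
        refine sum_congr rfl fun a _ => ?_
        rw [Equiv.sum_comp e (fun b => φ (if R a b then _ else _)), sum_ite_rowDegree]

lemma sum_sum_logRootFactorial_relMinor_eq {e : α ≃ β} (he : e ∈ perfectMatchings R) :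
    ∑ i, ∑ j : {a // a ≠ i}, logRootFactorial (rowDegree (relMinor R i (e i)) j) =
      ∑ a, (Fintype.card α * logRootFactorial (rowDegree R a) - Real.log (rowDegree R a)) := by
  rw [sum_sum_relMinor_eq R _ he, ← Fintype.card_congr e]
  refine sum_congr rfl fun a _ => ?_
  obtain ⟨c, hc⟩ : ∃ c, rowDegree R a = c + 1 :=
    Nat.exists_eq_add_of_le' (card_pos.2 ⟨e a, by simp [mem_perfectMatchings.1 he a]⟩)
  rw [hc, Nat.add_sub_cancel]
  push_cast
  linear_combination log_succ_add_mul_logRootFactorial c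

lemma log_card_perfectMatchings_le_of_relMinor
    (ih : ∀ i k, Real.log #(perfectMatchings (relMinor R i k)) ≤
      ∑ j, logRootFactorial (rowDegree (relMinor R i k) j)) :
    Real.log #(perfectMatchings R) ≤ ∑ a, logRootFactorial (rowDegree R a) := by
  set M := perfectMatchings R
  set N : ℝ := (Fintype.card α : ℝ)
  have hF : 0 ≤ ∑ a, logRootFactorial (rowDegree R a) :=
    sum_nonneg fun a _ => logRootFactorial_nonneg _
  obtain hM | ⟨e₀, he₀⟩ := M.eq_empty_or_nonempty
  · simpa [hM] using hF
  obtain hα | hα := isEmpty_or_nonempty α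
  · have : #M ≤ 1 := (card_le_univ M).trans (Fintype.card_le_one_iff_subsingleton.2 inferInstance)
    exact (Real.log_nonpos (Nat.cast_nonneg _) (by exact_mod_cast this)).trans hF
  have key : (N * #M) * Real.log #M ≤ (N * #M) * ∑ a, logRootFactorial (rowDegree R a) :=
    calc (N * #M) * Real.log #M
        = ∑ i : α, (#M : ℝ) * Real.log #M := by simp [N, mul_assoc]
      _ ≤ ∑ i, (#M * Real.log (rowDegree R i) + ∑ e ∈ M,
            ∑ j : {a // a ≠ i}, logRootFactorial (rowDegree (relMinor R i (e i)) j)) :=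
          sum_le_sum fun i _ => mul_log_card_perfectMatchings_le R i _ (ih i)
      _ = (N * #M) * ∑ a, logRootFactorial (rowDegree R a) := by
          rw [sum_add_distrib, sum_comm,
            sum_congr rfl fun e he => sum_sum_logRootFactorial_relMinor_eq R he, sum_const,
            nsmul_eq_mul, ← mul_sum, sum_sub_distrib, ← mul_sum]
          ring
  have hN : 0 < N := Nat.cast_pos.2 Fintype.card_pos
  have hp : (0 : ℝ) < #M := Nat.cast_pos.2 (card_pos.2 ⟨e₀, he₀⟩)
  exact le_of_mul_le_mul_left key (mul_pos hN hp)

theorem log_card_perfectMatchings_le :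
    Real.log #(perfectMatchings R) ≤ ∑ a, logRootFactorial (rowDegree R a) := by
  induction h : Fintype.card α using Nat.strong_induction_on generalizing α β with
  | _ n ih =>
    refine log_card_perfectMatchings_le_of_relMinor R fun i k => ih (n - 1) ?_ _ ?_
    · have := Fintype.card_pos_iff.2 ⟨i⟩
      omega
    · simp [Fintype.card_subtype_compl, h]

theorem card_perfectMatchings_le_prod (s : α → ℕ) (hs : ∀ a, rowDegree R a ≤ s a) :
    (#(perfectMatchings R) : ℝ) ≤ ∏ a, ((s a).factorial : ℝ) ^ ((1 : ℝ) / s a) := by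
  simp_rw [rpow_one_div_eq_exp_logRootFactorial, ← Real.exp_sum]
  rcases (#(perfectMatchings R)).eq_zero_or_pos with h | h
  · rw [h, Nat.cast_zero]
    exact (Real.exp_pos _).le
  rw [← Real.exp_log (Nat.cast_pos.2 h)]
  exact Real.exp_le_exp.2 ((log_card_perfectMatchings_le R).trans
    (sum_le_sum fun a _ => monotone_logRootFactorial (hs a)))

end PerfectMatchings

theorem perm3_le_prod_general (n : ℕ) (A : Fin n → Fin n → Fin n → ℝ) (m s : Fin n → ℕ)
    (h01 : ∀ i j k, A i j k = 0 ∨ A i j k = 1)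
    (hm : ∀ i, (Finset.univ.filter fun j => ∃ k, A i j k = 1).card ≤ m i)
    (hs : ∀ i j, (Finset.univ.filter fun k => A i j k = 1).card ≤ s i) :
    perm3 A ≤ ∏ i, ((m i).factorial : ℝ) ^ ((1 : ℝ) / (m i)) *
      ((s i).factorial : ℝ) ^ ((1 : ℝ) / (s i)) := by
  set L : Equiv.Perm (Fin n) → Fin n → Fin n → Prop := fun σ i k => A i (σ i) k = 1
  set J : Fin n → Fin n → Prop := fun i j => ∃ k, A i j k = 1
  have hperm : perm3 A = ∑ σ, (#(perfectMatchings (L σ)) : ℝ) :=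
    sum_congr rfl fun σ _ => sum_prod_eq_card_perfectMatchings _ fun i k => h01 i (σ i) k
  have hsupp : ∀ σ ∉ perfectMatchings J, (#(perfectMatchings (L σ)) : ℝ) = 0 := by
    intro σ hσ
    obtain ⟨i, hi⟩ := not_forall.1 (mt mem_perfectMatchings.2 hσ)
    rw [Nat.cast_eq_zero, card_eq_zero]
    exact eq_empty_of_forall_notMem fun π hπ => hi ⟨π i, mem_perfectMatchings.1 hπ i⟩
  rw [prod_mul_distrib, hperm, ← sum_subset (subset_univ _) fun σ _ hσ => hsupp σ hσ]
  calc ∑ σ ∈ perfectMatchings J, (#(perfectMatchings (L σ)) : ℝ)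
      ≤ ∑ σ ∈ perfectMatchings J, ∏ i, ((s i).factorial : ℝ) ^ ((1 : ℝ) / s i) :=
        sum_le_sum fun σ _ => card_perfectMatchings_le_prod _ s fun i => hs i (σ i)
    _ = #(perfectMatchings J) * ∏ i, ((s i).factorial : ℝ) ^ ((1 : ℝ) / s i) := by
        rw [sum_const, nsmul_eq_mul]
    _ ≤ _ := mul_le_mul_of_nonneg_right (card_perfectMatchings_le_prod J m hm) (by positivity)

/-- let `A` be a 3-dimensional (0,1)-matrix of order `n`; if for each `i` at most
`m i ≥ 1` of the lines `l_{i,j} = (a_{i,j,1}, …, a_{i,j,n})` contain a 1, and every line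
`l_{i,j}` contains at most `s i ≥ 1` ones, then
`per A ≤ ∏ i, (m i)!^(1/m i) * (s i)!^(1/s i)`. -/
theorem perm3_le_prod (n : ℕ) (A : Fin n → Fin n → Fin n → ℝ) (m s : Fin n → ℕ)
    (h01 : ∀ i j k, A i j k = 0 ∨ A i j k = 1)
    (hm1 : ∀ i, 1 ≤ m i) (hs1 : ∀ i, 1 ≤ s i)
    (hm : ∀ i, (Finset.univ.filter fun j => ∃ k, A i j k = 1).card ≤ m i)
    (hs : ∀ i j, (Finset.univ.filter fun k => A i j k = 1).card ≤ s i) :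
    perm3 A ≤ ∏ i, ((m i).factorial : ℝ) ^ ((1 : ℝ) / (m i)) *
      ((s i).factorial : ℝ) ^ ((1 : ℝ) / (s i)) :=
  perm3_le_prod_general n A m s h01 hm hs
end

section
/- Let g(x) = e^{1/x} · x^{1 + 1/(2x)} · e^{-1}, let m ≥ 1 be an integer, and let s_1, …, s_m be real numbers each greater than 1 with ∑_{β=1}^m s_β = r. Then ∑_{β=1}^m g(s_β) ≤ m · g(r/m). -/
/-!
Write `g = exp ∘ logG` with `logG x = 1/x - 1 + (1 + 1/(2x)) log x`. Then
`g'' = g · (logG'' + logG'²)` and `logG'' + logG'² = ((1 + log x)² - 2x) / (4x⁴)`, which is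
`≤ 0` for `x ≥ 1`. So `g` is concave on `[1, ∞)`, and the claim is Jensen's inequality for
equal weights.
-/

open Real Set Finset

lemma ConcaveOn.sum_le_card_mul_map_average {𝕜 ι : Type*} [Field 𝕜] [LinearOrder 𝕜]
    [IsStrictOrderedRing 𝕜] {s : Set 𝕜} {f : 𝕜 → 𝕜} (hf : ConcaveOn 𝕜 s f) {t : Finset ι}
    {p : ι → 𝕜} (hp : ∀ i ∈ t, p i ∈ s) :
    ∑ i ∈ t, f (p i) ≤ #t * f ((∑ i ∈ t, p i) / #t) := by
  rcases t.eq_empty_or_nonempty with rfl | ht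
  · simp
  have hcard : (0 : 𝕜) < #t := by exact_mod_cast ht.card_pos
  have hjensen := hf.le_map_sum (t := t) (w := fun _ ↦ (#t : 𝕜)⁻¹) (p := p)
    (fun _ _ ↦ by positivity) (by simp [hcard.ne']) hp
  simp only [smul_eq_mul, ← mul_sum] at hjensen
  rw [div_eq_inv_mul]
  calc ∑ i ∈ t, f (p i) = #t * ((#t : 𝕜)⁻¹ * ∑ i ∈ t, f (p i)) := by field_simp
    _ ≤ #t * f ((#t : 𝕜)⁻¹ * ∑ i ∈ t, p i) := by gcongr

lemma concaveOn_exp_comp_of_deriv2_add_sq_nonpos {D : Set ℝ} (hD : Convex ℝ D)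
    {u u' u'' : ℝ → ℝ} (hu : ∀ x ∈ D, HasDerivAt u (u' x) x)
    (hu' : ∀ x ∈ interior D, HasDerivAt u' (u'' x) x)
    (h : ∀ x ∈ interior D, u'' x + u' x ^ 2 ≤ 0) :
    ConcaveOn ℝ D (fun x ↦ exp (u x)) := by
  refine concaveOn_of_hasDerivWithinAt2_nonpos (f' := fun x ↦ exp (u x) * u' x)
    (f'' := fun x ↦ exp (u x) * (u'' x + u' x ^ 2)) hD
    (fun x hx ↦ (hu x hx).exp.continuousAt.continuousWithinAt)
    (fun x hx ↦ (hu x (interior_subset hx)).exp.hasDerivWithinAt)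
    (fun x hx ↦ ?_)
    (fun x hx ↦ mul_nonpos_of_nonneg_of_nonpos (exp_pos _).le (h x hx))
  refine (((hu x (interior_subset hx)).exp.mul (hu' x hx)).congr_deriv ?_).hasDerivWithinAt
  ring

lemma one_add_log_sq_le {x : ℝ} (hx : 1 ≤ x) : (1 + log x) ^ 2 ≤ 2 * x := by
  -- `log y ≤ y - 1` at `y = √(x / 2)` gives `1 + log x ≤ √(2x) + log 2 - 1 < √(2x)`.
  set y := √(x / 2)
  have hy : 0 < y := by positivity
  have hxy : x = 2 * y ^ 2 := by rw [sq_sqrt (by positivity)]; ring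
  have hlog : log x = log 2 + 2 * log y := by
    rw [hxy, log_mul two_ne_zero (by positivity), log_pow]; push_cast; ring
  have hlogy := log_le_sub_one_of_pos hy
  have hlog2 := log_two_lt_d9
  have hlogx := log_nonneg hx
  nlinarith

noncomputable def g (x : ℝ) : ℝ := exp (1 / x) * x ^ (1 + 1 / (2 * x)) * exp (-1)

noncomputable def logG (x : ℝ) : ℝ := x⁻¹ - 1 + (1 + x⁻¹ / 2) * log x

lemma exp_logG {x : ℝ} (hx : 0 < x) : exp (logG x) = g x := by
  rw [g, rpow_def_of_pos hx, ← exp_add, ← exp_add, logG]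
  ring_nf

lemma hasDerivAt_logG {x : ℝ} (hx : 0 < x) :
    HasDerivAt logG (x⁻¹ - (1 + log x) / (2 * x ^ 2)) x := by
  have hcoeff := ((hasDerivAt_inv hx.ne').div_const 2).const_add 1
  refine (((hasDerivAt_inv hx.ne').sub_const 1).add
    (hcoeff.mul (hasDerivAt_log hx.ne'))).congr_deriv ?_
  field_simp
  ring

lemma hasDerivAt_deriv_logG {x : ℝ} (hx : 0 < x) :
    HasDerivAt (fun y ↦ y⁻¹ - (1 + log y) / (2 * y ^ 2))
      (-(x ^ 2)⁻¹ + (1 + 2 * log x) / (2 * x ^ 3)) x := by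
  have hden : HasDerivAt (fun y : ℝ ↦ 2 * y ^ 2) (2 * (2 * x)) x := by
    simpa using (hasDerivAt_pow 2 x).const_mul 2
  refine ((hasDerivAt_inv hx.ne').sub
    (((hasDerivAt_log hx.ne').const_add 1).div hden (by positivity))).congr_deriv ?_
  field_simp
  ring

lemma concaveOn_g : ConcaveOn ℝ (Ici 1) g := by
  have hpos : ∀ x ∈ Ici (1 : ℝ), 0 < x := fun x hx ↦ zero_lt_one.trans_le hx
  refine (concaveOn_exp_comp_of_deriv2_add_sq_nonpos (convex_Ici 1)
    (fun x hx ↦ hasDerivAt_logG (hpos x hx))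
    (fun x hx ↦ hasDerivAt_deriv_logG (hpos x (interior_subset hx))) fun x hx ↦ ?_).congr
    fun x hx ↦ exp_logG (hpos x hx)
  have hx1 : 1 ≤ x := interior_subset hx
  have hx0 : 0 < x := hpos x hx1
  have heq : -(x ^ 2)⁻¹ + (1 + 2 * log x) / (2 * x ^ 3) + (x⁻¹ - (1 + log x) / (2 * x ^ 2)) ^ 2
      = ((1 + log x) ^ 2 - 2 * x) / (4 * x ^ 4) := by
    field_simp
    ring
  rw [heq]
  exact div_nonpos_of_nonpos_of_nonneg (by linarith [one_add_log_sq_le hx1]) (by positivity)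

theorem sum_g_le_of_sum_eq_general (m : ℕ) (s : Fin m → ℝ) (r : ℝ)
    (hs : ∀ β, 1 < s β) (hr : ∑ β, s β = r) :
    ∑ β, (Real.exp (1 / s β) * (s β) ^ (1 + 1 / (2 * s β)) * Real.exp (-1)) ≤
      (m : ℝ) * (Real.exp (1 / (r / m)) * (r / m) ^ (1 + 1 / (2 * (r / m))) * Real.exp (-1)) := by
  subst hr
  have := concaveOn_g.sum_le_card_mul_map_average (t := univ) fun β _ ↦ (hs β).le
  rwa [card_univ, Fintype.card_fin] at this

/-- for `g(x) = e^(1/x) * x^(1 + 1/(2x)) * e^(-1)`, an integer `m ≥ 1`, and real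
numbers `s_1, …, s_m`, each greater than 1, with `∑ β, s β = r`, one has
`∑ β, g (s β) ≤ m * g (r / m)`. -/
theorem sum_g_le_of_sum_eq (m : ℕ) (hm : 1 ≤ m) (s : Fin m → ℝ) (r : ℝ)
    (hs : ∀ β, 1 < s β) (hr : ∑ β, s β = r) :
    ∑ β, (Real.exp (1 / s β) * (s β) ^ (1 + 1 / (2 * s β)) * Real.exp (-1)) ≤
      (m : ℝ) * (Real.exp (1 / (r / m)) * (r / m) ^ (1 + 1 / (2 * (r / m))) * Real.exp (-1)) :=
  sum_g_le_of_sum_eq_general m s r hs hr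
end
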